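/- arXiv:2204.02196 — 8 statements merged into one kernel-verified Lean document; each statement's English description precedes it below -/
import Mathlib

section
/- Let ρ be an action of a 3-Lie algebra (g,[·,·,·]_g) on a 3-Lie algebra (h,[·,·,·]_h), and let λ ∈ K. Then the direct sum vector space g ⊕ h equipped with the semidirect product bracket [·,·,·]_ρ is a 3-Lie algebra; that is, [·,·,·]_ρ is skew-symmetric and satisfies the Fundamental Identity. -/
/-- A 3-Lie algebra over a field `K`: a trilinear bracket that is alternating
(skew-symmetric) and satisfies the Fundamental Identity. -/
structure ThreeLieAlg (K : Type*) [Field K] (g : Type*) [AddCommGroup g] [Module K g] where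
  br : g →ₗ[K] g →ₗ[K] g →ₗ[K] g
  skew12 : ∀ x y z : g, br x y z = - br y x z
  skew23 : ∀ x y z : g, br x y z = - br x z y
  fund : ∀ x1 x2 x3 x4 x5 : g,
    br x1 x2 (br x3 x4 x5) =
      br (br x1 x2 x3) x4 x5 + br x3 (br x1 x2 x4) x5 + br x3 x4 (br x1 x2 x5)

/-- A representation of a 3-Lie algebra `(g, L)` on a vector space `V`. -/
structure ThreeLieRep (K : Type*) [Field K] (g : Type*) [AddCommGroup g] [Module K g]
    (L : ThreeLieAlg K g) (V : Type*) [AddCommGroup V] [Module K V] where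
  ρ : g →ₗ[K] g →ₗ[K] (V →ₗ[K] V)
  skew : ∀ x y : g, ρ x y = - ρ y x
  rep1 : ∀ (x1 x2 x3 x4 : g) (v : V),
    ρ x1 x2 (ρ x3 x4 v) =
      ρ (L.br x1 x2 x3) x4 v + ρ x3 (L.br x1 x2 x4) v + ρ x3 x4 (ρ x1 x2 v)
  rep2 : ∀ (x1 x2 x3 x4 : g) (v : V),
    ρ x1 (L.br x2 x3 x4) v =
      ρ x3 x4 (ρ x1 x2 v) - ρ x2 x4 (ρ x1 x3 v) + ρ x2 x3 (ρ x1 x4 v)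

/-- An action of a 3-Lie algebra `(g, L)` on a 3-Lie algebra `(h, H)`: a representation
on the underlying vector space of `h` such that `ρ(x,y)u` is central in `h` and
`ρ(x,y)` kills all brackets of `h`. -/
structure ThreeLieAction (K : Type*) [Field K]
    (g : Type*) [AddCommGroup g] [Module K g]
    (h : Type*) [AddCommGroup h] [Module K h]
    (L : ThreeLieAlg K g) (H : ThreeLieAlg K h)
    extends ThreeLieRep K g L h where
  central : ∀ (x y : g) (u v w : h), H.br (ρ x y u) v w = 0
  annih : ∀ (x y : g) (u v w : h), ρ x y (H.br u v w) = 0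

/-- `T : h → g` is a relative Rota-Baxter operator of weight `lam` with respect to the
action `A` of `(g, L)` on `(h, H)`. -/
def IsRRB {K : Type*} [Field K]
    {g : Type*} [AddCommGroup g] [Module K g]
    {h : Type*} [AddCommGroup h] [Module K h]
    {L : ThreeLieAlg K g} {H : ThreeLieAlg K h}
    (A : ThreeLieAction K g h L H) (lam : K) (T : h →ₗ[K] g) : Prop :=
  ∀ u v w : h,
    L.br (T u) (T v) (T w) =
      T (A.ρ (T u) (T v) w + A.ρ (T v) (T w) u + A.ρ (T w) (T u) v + lam • H.br u v w)

/-- The semidirect product bracket on `g × h` associated to an action `A` and weight `lam`. -/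
def sdBr {K : Type*} [Field K]
    {g : Type*} [AddCommGroup g] [Module K g]
    {h : Type*} [AddCommGroup h] [Module K h]
    {L : ThreeLieAlg K g} {H : ThreeLieAlg K h}
    (A : ThreeLieAction K g h L H) (lam : K) :
    g × h → g × h → g × h → g × h :=
  fun p q r =>
    (L.br p.1 q.1 r.1,
      A.ρ p.1 q.1 r.2 + A.ρ q.1 r.1 p.2 + A.ρ r.1 p.1 q.2 + lam • H.br p.2 q.2 r.2)

/-- The descendent bracket on `h` associated to a relative Rota-Baxter operator `T`. -/
def descBr {K : Type*} [Field K]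
    {g : Type*} [AddCommGroup g] [Module K g]
    {h : Type*} [AddCommGroup h] [Module K h]
    {L : ThreeLieAlg K g} {H : ThreeLieAlg K h}
    (A : ThreeLieAction K g h L H) (lam : K) (T : h →ₗ[K] g) :
    h → h → h → h :=
  fun u v w =>
    A.ρ (T u) (T v) w + A.ρ (T v) (T w) u + A.ρ (T w) (T u) v + lam • H.br u v w

/-- The map `ϱ(u,v)(x) = [Tu,Tv,x]_g - T(ρ(x,Tu)v + ρ(Tv,x)u)` induced by `T`. -/
def varrho {K : Type*} [Field K]
    {g : Type*} [AddCommGroup g] [Module K g]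
    {h : Type*} [AddCommGroup h] [Module K h]
    {L : ThreeLieAlg K g} {H : ThreeLieAlg K h}
    (A : ThreeLieAction K g h L H) (T : h →ₗ[K] g) :
    h → h → g → g :=
  fun u v x => L.br (T u) (T v) x - T (A.ρ x (T u) v + A.ρ (T v) x u)

/-- The semidirect product bracket makes `g ⊕ h` into a 3-Lie algebra:
it is skew-symmetric and satisfies the Fundamental Identity. -/
theorem semidirect_product_is_three_lie
    (K : Type*) [Field K] [CharZero K]
    (g : Type*) [AddCommGroup g] [Module K g]
    (h : Type*) [AddCommGroup h] [Module K h]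
    (L : ThreeLieAlg K g) (H : ThreeLieAlg K h)
    (A : ThreeLieAction K g h L H) (lam : K) :
    (∀ p q r : g × h, sdBr A lam p q r = - sdBr A lam q p r) ∧
    (∀ p q r : g × h, sdBr A lam p q r = - sdBr A lam p r q) ∧
    (∀ p1 p2 p3 p4 p5 : g × h,
      sdBr A lam p1 p2 (sdBr A lam p3 p4 p5) =
        sdBr A lam (sdBr A lam p1 p2 p3) p4 p5
        + sdBr A lam p3 (sdBr A lam p1 p2 p4) p5
        + sdBr A lam p3 p4 (sdBr A lam p1 p2 p5)) := by
  have hs : ∀ (x y : g) (v : h), A.ρ x y v = - A.ρ y x v := by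
    intro x y v; rw [A.skew, LinearMap.neg_apply]
  have hc2 : ∀ (x y : g) (u v w : h), H.br v (A.ρ x y u) w = 0 := by
    intro x y u v w; rw [H.skew12, A.central, neg_zero]
  have hc3 : ∀ (x y : g) (u v w : h), H.br v w (A.ρ x y u) = 0 := by
    intro x y u v w; rw [H.skew23, hc2, neg_zero]
  refine ⟨fun p q r => ?_, fun p q r => ?_, fun p1 p2 p3 p4 p5 => ?_⟩
  · obtain ⟨x1, u1⟩ := p; obtain ⟨x2, u2⟩ := q; obtain ⟨x3, u3⟩ := r
    simp only [sdBr, Prod.neg_mk, Prod.mk.injEq]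
    constructor
    · rw [L.skew12]
    · rw [hs x2 x1 u3, hs x3 x2 u1, hs x1 x3 u2, H.skew12 u2 u1 u3]
      module
  · obtain ⟨x1, u1⟩ := p; obtain ⟨x2, u2⟩ := q; obtain ⟨x3, u3⟩ := r
    simp only [sdBr, Prod.neg_mk, Prod.mk.injEq]
    constructor
    · rw [L.skew23]
    · rw [hs x1 x3 u2, hs x3 x2 u1, hs x2 x1 u3, H.skew23 u1 u2 u3]
      module
  · obtain ⟨x1, u1⟩ := p1; obtain ⟨x2, u2⟩ := p2; obtain ⟨x3, u3⟩ := p3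
    obtain ⟨x4, u4⟩ := p4; obtain ⟨x5, u5⟩ := p5
    simp only [sdBr, Prod.mk_add_mk, Prod.mk.injEq]
    constructor
    · rw [L.fund]
    · simp only [map_add, map_smul, LinearMap.add_apply, LinearMap.smul_apply,
        A.annih, A.central, hc2, hc3, smul_zero, add_zero, zero_add, smul_add]
      rw [A.rep1 x1 x2 x3 x4 u5, A.rep1 x1 x2 x4 x5 u3, A.rep1 x1 x2 x5 x3 u4,
        A.rep2 x2 x3 x4 x5 u1, hs (L.br x3 x4 x5) x1 u2, A.rep2 x1 x3 x4 x5 u2,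
        H.fund u1 u2 u3 u4 u5]
      simp only [hs x5 x3, hs x3 x1, hs x4 x1, hs x5 x1]
      simp only [map_add, map_neg, map_smul]
      module
end

section
/- Let ρ be an action of a 3-Lie algebra (g,[·,·,·]_g) on a 3-Lie algebra (h,[·,·,·]_h) and λ ∈ K. A linear map T : h → g is a relative Rota-Baxter operator of weight λ if and only if its graph Gr(T) = {Tu + u : u ∈ h} is a subalgebra of the semidirect product 3-Lie algebra g ⋉_ρ h, i.e. Gr(T) is closed under the bracket [·,·,·]_ρ. -/
/-- `T` is a relative Rota-Baxter operator of weight `lam` iff its graph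
`Gr(T) = {(Tu, u) | u ∈ h}` is closed under the semidirect product bracket. -/
theorem rrb_iff_graph_subalgebra
    (K : Type*) [Field K] [CharZero K]
    (g : Type*) [AddCommGroup g] [Module K g]
    (h : Type*) [AddCommGroup h] [Module K h]
    (L : ThreeLieAlg K g) (H : ThreeLieAlg K h)
    (A : ThreeLieAction K g h L H) (lam : K) (T : h →ₗ[K] g) :
    IsRRB A lam T ↔
      ∀ p ∈ {z : g × h | ∃ u : h, z = (T u, u)},
      ∀ q ∈ {z : g × h | ∃ u : h, z = (T u, u)},
      ∀ r ∈ {z : g × h | ∃ u : h, z = (T u, u)},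
        sdBr A lam p q r ∈ {z : g × h | ∃ u : h, z = (T u, u)} := by
  constructor
  · rintro hT p ⟨u, rfl⟩ q ⟨v, rfl⟩ r ⟨w, rfl⟩
    exact ⟨A.ρ (T u) (T v) w + A.ρ (T v) (T w) u + A.ρ (T w) (T u) v + lam • H.br u v w,
      by simp [sdBr, hT u v w]⟩
  · intro hG u v w
    obtain ⟨s, hs⟩ := hG (T u, u) ⟨u, rfl⟩ (T v, v) ⟨v, rfl⟩ (T w, w) ⟨w, rfl⟩
    have h1 := congrArg Prod.fst hs
    have h2 := congrArg Prod.snd hs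
    simp [sdBr] at h1 h2
    rw [h1, h2]
end

section
/- Let T : h → g be a relative Rota-Baxter operator of weight λ from a 3-Lie algebra (h,[·,·,·]_h) to a 3-Lie algebra (g,[·,·,·]_g) with respect to an action ρ. Then the descendent bracket [·,·,·]_T makes h into a 3-Lie algebra (it is skew-symmetric and satisfies the Fundamental Identity), and T is a 3-Lie algebra homomorphism from (h,[·,·,·]_T) to (g,[·,·,·]_g), i.e. T([u,v,w]_T) = [Tu,Tv,Tw]_g for all u,v,w in h. -/
/-- The descendent bracket of a relative Rota-Baxter operator `T` makes `h`
into a 3-Lie algebra, and `T` is a homomorphism from this descendent 3-Lie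
algebra to `(g, [·,·,·]_g)`. -/
theorem descendent_three_lie_and_hom
    (K : Type*) [Field K] [CharZero K]
    (g : Type*) [AddCommGroup g] [Module K g]
    (h : Type*) [AddCommGroup h] [Module K h]
    (L : ThreeLieAlg K g) (H : ThreeLieAlg K h)
    (A : ThreeLieAction K g h L H) (lam : K) (T : h →ₗ[K] g)
    (hT : IsRRB A lam T) :
    (∀ u v w : h, descBr A lam T u v w = - descBr A lam T v u w) ∧
    (∀ u v w : h, descBr A lam T u v w = - descBr A lam T u w v) ∧
    (∀ u1 u2 u3 u4 u5 : h,
      descBr A lam T u1 u2 (descBr A lam T u3 u4 u5) =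
        descBr A lam T (descBr A lam T u1 u2 u3) u4 u5
        + descBr A lam T u3 (descBr A lam T u1 u2 u4) u5
        + descBr A lam T u3 u4 (descBr A lam T u1 u2 u5)) ∧
    (∀ u v w : h, T (descBr A lam T u v w) = L.br (T u) (T v) (T w)) := by
  
  have skew' : ∀ (a b : g) (v : h), A.ρ a b v = - A.ρ b a v := by
    intro a b v
    rw [A.skew]
    simp
  have cen2 : ∀ (x y : g) (u v w : h), H.br v (A.ρ x y u) w = 0 := by
    intro x y u v w
    rw [H.skew12, A.central, neg_zero]
  have cen3 : ∀ (x y : g) (u v w : h), H.br v w (A.ρ x y u) = 0 := by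
    intro x y u v w
    rw [H.skew23, H.skew12, A.central]
    simp
  refine ⟨?_, ?_, ?_, fun u v w => (hT u v w).symm⟩
  · intro u v w
    simp only [descBr]
    rw [skew' (T v) (T u) w, skew' (T u) (T w) v, skew' (T w) (T v) u, H.skew12 v u w]
    module
  · intro u v w
    simp only [descBr]
    rw [skew' (T u) (T w) v, skew' (T w) (T v) u, skew' (T v) (T u) w, H.skew23 u w v]
    module
  · intro u1 u2 u3 u4 u5
    simp only [descBr]
    rw [← hT u3 u4 u5, ← hT u1 u2 u3, ← hT u1 u2 u4, ← hT u1 u2 u5]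
    simp only [map_add, map_smul, LinearMap.add_apply, LinearMap.smul_apply,
      A.annih, A.central, cen2, cen3, smul_zero, add_zero, zero_add, smul_add]
    rw [A.rep1 (T u1) (T u2) (T u3) (T u4) u5,
        A.rep1 (T u1) (T u2) (T u4) (T u5) u3,
        A.rep1 (T u1) (T u2) (T u5) (T u3) u4,
        A.rep2 (T u2) (T u3) (T u4) (T u5) u1,
        skew' (L.br (T u3) (T u4) (T u5)) (T u1) u2,
        A.rep2 (T u1) (T u3) (T u4) (T u5) u2,
        H.fund u1 u2 u3 u4 u5,
        skew' (T u3) (T u1) u2,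
        skew' (T u4) (T u1) u2,
        skew' (T u5) (T u1) u2,
        skew' (T u5) (T u3) (A.ρ (T u2) (T u4) u1)]
    simp only [map_neg, neg_neg, smul_add]
    rw [skew' (T u5) (T u3) (A.ρ (T u1) (T u4) u2)]
    module
end

section
/- Let ρ be an action of a 3-Lie algebra (g,[·,·,·]_g) on a 3-Lie algebra (h,[·,·,·]_h) and λ ∈ K. A linear map T : h → g is a relative Rota-Baxter operator of weight λ if and only if the linear map \bar{T} : g ⊕ h → g ⊕ h defined by \bar{T}(x + u) = x + Tu (i.e. the block matrix (Id, T; 0, 0)) is a Nijenhuis operator on the semidirect product 3-Lie algebra g ⋉_ρ h. -/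
/-- A Nijenhuis operator on a 3-Lie algebra with bracket `br`. -/
def IsNijenhuis {k : Type*} [AddCommGroup k] (br : k → k → k → k) (N : k → k) : Prop :=
  ∀ x y z : k,
    br (N x) (N y) (N z) =
      N (br (N x) (N y) z + br x (N y) (N z) + br (N x) y (N z)
        - N (br (N x) y z) - N (br x (N y) z) - N (br x y (N z))
        + N (N (br x y z)))

/-!
Write `N (x, u) = (x + T u, 0)`. The map `N` is idempotent and its image `g × 0` is closed
under the semidirect bracket, so both sides of the Nijenhuis identity at `(x, u), (y, v), (z, w)`
lie in `g × 0`. Expanding trilinearly in `x + T u, y + T v, z + T w`, the inclusion–exclusion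
of the six correction terms cancels every contribution of `x, y, z`, and what remains is exactly
`[T u, T v, T w]_g = T (ρ(T u, T v) w + ρ(T v, T w) u + ρ(T w, T u) v + λ [u, v, w]_h)`.
-/

section

variable {K : Type*} [Field K] {g : Type*} [AddCommGroup g] [Module K g]
  {h : Type*} [AddCommGroup h] [Module K h] {L : ThreeLieAlg K g} {H : ThreeLieAlg K h}
  (A : ThreeLieAction K g h L H) (lam : K) (T : h →ₗ[K] g)

def sdLift (p : g × h) : g × h := (p.1 + T p.2, 0)

theorem isRRB_iff_descBr :
    IsRRB A lam T ↔ ∀ u v w, L.br (T u) (T v) (T w) = T (descBr A lam T u v w) :=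
  Iff.rfl

theorem sdBr_sdLift (p q r : g × h) :
    sdBr A lam (sdLift T p) (sdLift T q) (sdLift T r) =
      (L.br (p.1 + T p.2) (q.1 + T q.2) (r.1 + T r.2), 0) := by
  simp [sdBr, sdLift]

theorem sdLift_nijenhuis_rhs (p q r : g × h) :
    sdLift T (sdBr A lam (sdLift T p) (sdLift T q) r + sdBr A lam p (sdLift T q) (sdLift T r)
        + sdBr A lam (sdLift T p) q (sdLift T r) - sdLift T (sdBr A lam (sdLift T p) q r)
        - sdLift T (sdBr A lam p (sdLift T q) r) - sdLift T (sdBr A lam p q (sdLift T r))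
        + sdLift T (sdLift T (sdBr A lam p q r))) =
      (L.br (p.1 + T p.2) (q.1 + T q.2) (r.1 + T r.2)
        + (T (descBr A lam T p.2 q.2 r.2) - L.br (T p.2) (T q.2) (T r.2)), 0) := by
  obtain ⟨x, u⟩ := p
  obtain ⟨y, v⟩ := q
  obtain ⟨z, w⟩ := r
  simp only [sdLift, sdBr, descBr, map_add, map_zero, map_smul, LinearMap.add_apply,
    LinearMap.zero_apply, smul_zero, add_zero, zero_add, Prod.fst_add, Prod.snd_add,
    Prod.fst_sub, Prod.snd_sub, sub_zero]
  congr 1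
  abel

theorem sdLift_nijenhuis_iff :
    IsNijenhuis (sdBr A lam) (sdLift T) ↔ IsRRB A lam T := by
  simp only [IsNijenhuis, sdBr_sdLift, sdLift_nijenhuis_rhs, Prod.mk.injEq, and_true,
    left_eq_add, sub_eq_zero, isRRB_iff_descBr]
  exact ⟨fun hN u v w ↦ (hN (0, u) (0, v) (0, w)).symm, fun hT p q r ↦ (hT p.2 q.2 r.2).symm⟩

end

theorem rrb_iff_nijenhuis_general
    (K : Type*) [Field K]
    (g : Type*) [AddCommGroup g] [Module K g]
    (h : Type*) [AddCommGroup h] [Module K h]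
    (L : ThreeLieAlg K g) (H : ThreeLieAlg K h)
    (A : ThreeLieAction K g h L H) (lam : K) (T : h →ₗ[K] g) :
    IsRRB A lam T ↔
      IsNijenhuis (sdBr A lam) (fun p : g × h => (p.1 + T p.2, 0)) :=
  (sdLift_nijenhuis_iff A lam T).symm

/-- `T` is a relative Rota-Baxter operator of weight `lam` iff the map
`x + u ↦ x + Tu` on `g ⊕ h` is a Nijenhuis operator on the semidirect
product 3-Lie algebra. -/
theorem rrb_iff_nijenhuis
    (K : Type*) [Field K] [CharZero K]
    (g : Type*) [AddCommGroup g] [Module K g]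
    (h : Type*) [AddCommGroup h] [Module K h]
    (L : ThreeLieAlg K g) (H : ThreeLieAlg K h)
    (A : ThreeLieAction K g h L H) (lam : K) (T : h →ₗ[K] g) :
    IsRRB A lam T ↔
      IsNijenhuis (sdBr A lam) (fun p : g × h => (p.1 + T p.2, 0)) :=
  rrb_iff_nijenhuis_general K g h L H A lam T
end

section
/- Let T : h → g be a relative Rota-Baxter operator of weight λ from a 3-Lie algebra (h,[·,·,·]_h) to a 3-Lie algebra (g,[·,·,·]_g) with respect to an action ρ. Define ϱ : h × h → End(g) by ϱ(u,v)(x) = [Tu,Tv,x]_g - T(ρ(x,Tu)v + ρ(Tv,x)u). Then ϱ is a representation of the descendent 3-Lie algebra (h,[·,·,·]_T) on the vector space g. -/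
section Aux

lemma tri_rot {M : Type*} [AddCommGroup M] (br : M → M → M → M)
    (s12 : ∀ x y z : M, br x y z = - br y x z)
    (s23 : ∀ x y z : M, br x y z = - br x z y) (a b c : M) :
    br a b c = br c a b := by
  rw [s23 a b c, s12 a c b, neg_neg]

lemma tri_fi2 {M : Type*} [AddCommGroup M] (br : M → M → M → M)
    (s12 : ∀ x y z : M, br x y z = - br y x z)
    (s23 : ∀ x y z : M, br x y z = - br x z y)
    (fund : ∀ a b c d e : M, br a b (br c d e) =
      br (br a b c) d e + br c (br a b d) e + br c d (br a b e))
    (x1 x2 x3 x4 x5 : M) :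
    br x1 (br x2 x3 x4) x5 =
      br x3 x4 (br x1 x2 x5) - br x2 x4 (br x1 x3 x5) + br x2 x3 (br x1 x4 x5) := by
  have r := tri_rot br s12 s23
  have h1 := fund x1 x2 x3 x5 x4
  have h2 := fund x3 x5 x1 x2 x4
  have h3 := fund x2 x3 x1 x4 x5
  rw [r x3 x5 x1, r x3 x5 x2] at h2
  rw [r x2 x3 x1] at h3
  linear_combination (norm := abel1) -h1 - h2 - h3 - s23 x3 x4 (br x1 x2 x5)
    + r x2 x4 (br x1 x3 x5) - s23 (br x1 x2 x3) x4 x5 - s23 x1 x4 (br x2 x3 x5)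

variable {K : Type*} [Field K]
    {g : Type*} [AddCommGroup g] [Module K g]
    {h : Type*} [AddCommGroup h] [Module K h]
    {L : ThreeLieAlg K g} {H : ThreeLieAlg K h}

lemma cen2 (A : ThreeLieAction K g h L H) (x y : g) (u v w : h) :
    H.br u (A.ρ x y v) w = 0 := by
  rw [H.skew12, A.central, neg_zero]

lemma cen3 (A : ThreeLieAction K g h L H) (x y : g) (u v w : h) :
    H.br u v (A.ρ x y w) = 0 := by
  rw [H.skew23, cen2, neg_zero]

lemma sd_skew12 (A : ThreeLieAction K g h L H) (lam : K) (p q r : g × h) :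
    sdBr A lam p q r = - sdBr A lam q p r := by
  simp only [sdBr, Prod.neg_mk]
  refine Prod.ext ?_ ?_
  · exact L.skew12 _ _ _
  · rw [A.skew q.1 p.1, A.skew p.1 r.1, A.skew r.1 q.1, H.skew12 q.2 p.2 r.2]
    simp only [LinearMap.neg_apply, smul_neg]
    abel

lemma sd_skew23 (A : ThreeLieAction K g h L H) (lam : K) (p q r : g × h) :
    sdBr A lam p q r = - sdBr A lam p r q := by
  simp only [sdBr, Prod.neg_mk]
  refine Prod.ext ?_ ?_
  · exact L.skew23 _ _ _
  · rw [A.skew p.1 r.1, A.skew r.1 q.1, A.skew q.1 p.1, H.skew23 p.2 r.2 q.2]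
    simp only [LinearMap.neg_apply, smul_neg]
    abel

lemma sd_fund (A : ThreeLieAction K g h L H) (lam : K) (p1 p2 p3 p4 p5 : g × h) :
    sdBr A lam p1 p2 (sdBr A lam p3 p4 p5) =
      sdBr A lam (sdBr A lam p1 p2 p3) p4 p5 + sdBr A lam p3 (sdBr A lam p1 p2 p4) p5
        + sdBr A lam p3 p4 (sdBr A lam p1 p2 p5) := by
  obtain ⟨a1, m1⟩ := p1
  obtain ⟨a2, m2⟩ := p2
  obtain ⟨a3, m3⟩ := p3
  obtain ⟨a4, m4⟩ := p4
  obtain ⟨a5, m5⟩ := p5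
  simp only [sdBr, Prod.mk_add_mk]
  refine Prod.ext ?_ ?_
  · exact L.fund _ _ _ _ _
  · simp only [map_add, map_smul, LinearMap.add_apply, LinearMap.smul_apply,
      A.annih, A.central, cen2 A, cen3 A, smul_zero, add_zero, zero_add, smul_add]
    rw [A.rep1 a1 a2 a3 a4 m5, A.rep1 a1 a2 a4 a5 m3, A.rep1 a1 a2 a5 a3 m4,
      A.rep2 a2 a3 a4 a5 m1, A.skew (L.br a3 a4 a5) a1, A.skew a5 a3,
      A.skew a3 a1, A.skew a4 a1, A.skew a5 a1, H.fund m1 m2 m3 m4 m5]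
    simp only [LinearMap.neg_apply, map_neg, smul_add]
    rw [A.rep2 a1 a3 a4 a5 m2]
    module

lemma sd_key (A : ThreeLieAction K g h L H) (lam : K) (T : h →ₗ[K] g)
    (hT : IsRRB A lam T) (u v : h) (p : g × h) :
    (sdBr A lam (T u, u) (T v, v) p).1 - T (sdBr A lam (T u, u) (T v, v) p).2
      = varrho A T u v (p.1 - T p.2) := by
  have hh := hT u v p.2
  simp only [map_add, map_smul] at hh
  simp only [sdBr, varrho, map_add, map_sub, map_smul, LinearMap.add_apply,
    LinearMap.sub_apply, LinearMap.smul_apply]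
  linear_combination (norm := module) hh

end Aux

/-- The map `ϱ(u,v)(x) = [Tu,Tv,x]_g - T(ρ(x,Tu)v + ρ(Tv,x)u)` is a representation
of the descendent 3-Lie algebra `(h, [·,·,·]_T)` on the vector space `g`. -/
theorem varrho_is_representation
    (K : Type*) [Field K] [CharZero K]
    (g : Type*) [AddCommGroup g] [Module K g]
    (h : Type*) [AddCommGroup h] [Module K h]
    (L : ThreeLieAlg K g) (H : ThreeLieAlg K h)
    (A : ThreeLieAction K g h L H) (lam : K) (T : h →ₗ[K] g)
    (hT : IsRRB A lam T) :
    -- ϱ is skew-symmetric: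
    (∀ (u v : h) (x : g), varrho A T u v x = - varrho A T v u x) ∧
    -- first representation identity with respect to the descendent bracket:
    (∀ (u1 u2 u3 u4 : h) (x : g),
      varrho A T u1 u2 (varrho A T u3 u4 x) =
        varrho A T (descBr A lam T u1 u2 u3) u4 x
        + varrho A T u3 (descBr A lam T u1 u2 u4) x
        + varrho A T u3 u4 (varrho A T u1 u2 x)) ∧
    -- second representation identity with respect to the descendent bracket:
    (∀ (u1 u2 u3 u4 : h) (x : g),
      varrho A T u1 (descBr A lam T u2 u3 u4) x =
        varrho A T u3 u4 (varrho A T u1 u2 x)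
        - varrho A T u2 u4 (varrho A T u1 u3 x)
        + varrho A T u2 u3 (varrho A T u1 u4 x)) := by
  classical
  set e : h → g × h := fun u => (T u, u) with he
  set P : g × h → g := fun p => p.1 - T p.2 with hP
  have key : ∀ (u v : h) (p : g × h),
      P (sdBr A lam (e u) (e v) p) = varrho A T u v (P p) := by
    intro u v p
    exact sd_key A lam T hT u v p
  have Pzero : ∀ y : g, P (y, 0) = y := by
    intro y; simp [hP]
  have emorph : ∀ u v w : h,
      sdBr A lam (e u) (e v) (e w) = e (descBr A lam T u v w) := by
    intro u v w
    refine Prod.ext ?_ rfl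
    exact hT u v w
  have base : ∀ (u v : h) (x : g),
      P (sdBr A lam (e u) (e v) (x, 0)) = varrho A T u v x := by
    intro u v x; rw [key, Pzero]
  refine ⟨?_, ?_, ?_⟩
  · intro u v x
    simp only [varrho]
    rw [L.skew12 (T v) (T u) x, A.skew x (T v), A.skew (T u) x]
    simp only [LinearMap.neg_apply, map_neg, map_add]
    abel
  · intro u1 u2 u3 u4 x
    have hf := congrArg P (sd_fund A lam (e u1) (e u2) (e u3) (e u4) ((x, 0) : g × h))
    have Padd : ∀ p q r : g × h, P (p + q + r) = P p + P q + P r := by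
      intro p q r; simp [hP]; abel
    rw [Padd] at hf
    rw [emorph u1 u2 u3, emorph u1 u2 u4] at hf
    simp only [key, Pzero] at hf
    exact hf
  · intro u1 u2 u3 u4 x
    have hf := congrArg P (tri_fi2 (sdBr A lam) (sd_skew12 A lam) (sd_skew23 A lam)
      (sd_fund A lam) (e u1) (e u2) (e u3) (e u4) ((x, 0) : g × h))
    have Psub : ∀ p q r : g × h, P (p - q + r) = P p - P q + P r := by
      intro p q r; simp [hP]; abel
    rw [Psub] at hf
    rw [emorph u2 u3 u4] at hf
    simp only [key, Pzero] at hf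
    exact hf
end

section
/- Let T and T' be relative Rota-Baxter operators of weight λ from a 3-Lie algebra (h,[·,·,·]_h) to a 3-Lie algebra (g,[·,·,·]_g) with respect to an action ρ, and let (ψ_g, ψ_h) be a homomorphism from T to T'. Let ϱ and ϱ' be the representations induced by T and T' respectively, i.e. ϱ(u,v)(x) = [Tu,Tv,x]_g - T(ρ(x,Tu)v + ρ(Tv,x)u) and ϱ'(u,v)(x) = [T'u,T'v,x]_g - T'(ρ(x,T'u)v + ρ(T'v,x)u). Then ψ_g ∘ ϱ(u,v) = ϱ'(ψ_h(u),ψ_h(v)) ∘ ψ_g for all u,v in h. -/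
/-- For a homomorphism `(ψ_g, ψ_h)` from `T` to `T'`, the induced representations
`ϱ` and `ϱ'` satisfy `ψ_g ∘ ϱ(u,v) = ϱ'(ψ_h(u),ψ_h(v)) ∘ ψ_g`. -/
theorem rrb_hom_intertwines_varrho
    (K : Type*) [Field K] [CharZero K]
    (g : Type*) [AddCommGroup g] [Module K g]
    (h : Type*) [AddCommGroup h] [Module K h]
    (L : ThreeLieAlg K g) (H : ThreeLieAlg K h)
    (A : ThreeLieAction K g h L H) (lam : K)
    (T T' : h →ₗ[K] g) (hT : IsRRB A lam T) (hT' : IsRRB A lam T')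
    (ψg : g →ₗ[K] g) (ψh : h →ₗ[K] h)
    (hψg : ∀ x y z : g, ψg (L.br x y z) = L.br (ψg x) (ψg y) (ψg z))
    (hψh : ∀ u v w : h, ψh (H.br u v w) = H.br (ψh u) (ψh v) (ψh w))
    (hcomm : ∀ u : h, ψg (T u) = T' (ψh u))
    (hequiv : ∀ (x y : g) (u : h), ψh (A.ρ x y u) = A.ρ (ψg x) (ψg y) (ψh u)) :
    ∀ (u v : h) (x : g),
      ψg (varrho A T u v x) = varrho A T' (ψh u) (ψh v) (ψg x) := by
  intro u v x
  simp only [varrho, map_sub, map_add, hψg, hcomm, hequiv]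
end

section
/- Let T : h → g be a relative Rota-Baxter operator of weight λ from a 3-Lie algebra (h,[·,·,·]_h) to a 3-Lie algebra (g,[·,·,·]_g) with respect to an action ρ. For fixed a,b ∈ g define the linear map f : h → g by f(u) = T(ρ(a,b)u) - [a,b,Tu]_g. Then f is a 1-cocycle of the descendent 3-Lie algebra (h,[·,·,·]_T) with coefficients in the representation ϱ; explicitly, for all u1,u2,u3 ∈ h: ϱ(u1,u2)f(u3) + ϱ(u2,u3)f(u1) + ϱ(u3,u1)f(u2) = f([u1,u2,u3]_T). -/
/-- For fixed `a, b ∈ g`, the map `f(u) = T(ρ(a,b)u) - [a,b,Tu]_g` is a 1-cocycle of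
the descendent 3-Lie algebra `(h, [·,·,·]_T)` with coefficients in the
representation `ϱ`. -/
theorem delta_is_one_cocycle
    (K : Type*) [Field K] [CharZero K]
    (g : Type*) [AddCommGroup g] [Module K g]
    (h : Type*) [AddCommGroup h] [Module K h]
    (L : ThreeLieAlg K g) (H : ThreeLieAlg K h)
    (A : ThreeLieAction K g h L H) (lam : K) (T : h →ₗ[K] g)
    (hT : IsRRB A lam T) (a b : g) :
    ∀ u1 u2 u3 : h,
      varrho A T u1 u2 (T (A.ρ a b u3) - L.br a b (T u3))
      + varrho A T u2 u3 (T (A.ρ a b u1) - L.br a b (T u1))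
      + varrho A T u3 u1 (T (A.ρ a b u2) - L.br a b (T u2)) =
        T (A.ρ a b (descBr A lam T u1 u2 u3))
        - L.br a b (T (descBr A lam T u1 u2 u3)) := by
  intro u1 u2 u3
  have cyc : ∀ x y z : g, L.br z x y = L.br x y z := by
    intro x y z
    rw [L.skew12 z x y, L.skew23 x z y, neg_neg]
  have cycH : ∀ x y z : h, H.br z x y = H.br x y z := by
    intro x y z
    rw [H.skew12 z x y, H.skew23 x z y, neg_neg]
  have hz : ∀ w u v : h, H.br u v (A.ρ a b w) = 0 := by
    intro w u v
    rw [← cycH u v (A.ρ a b w)]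
    exact A.central a b w u v
  simp only [varrho, descBr]
  rw [← hT u1 u2 u3, L.fund a b (T u1) (T u2) (T u3)]
  rw [cyc (T u2) (T u3) (L.br a b (T u1)), ← cyc (T u1) (L.br a b (T u2)) (T u3)]
  simp only [map_sub, map_add, map_smul, LinearMap.sub_apply, LinearMap.add_apply,
    LinearMap.smul_apply, smul_add, smul_sub]
  rw [hT u1 u2 (A.ρ a b u3), hT u2 u3 (A.ρ a b u1), hT u3 u1 (A.ρ a b u2)]
  rw [A.rep1 a b (T u1) (T u2) u3, A.rep1 a b (T u2) (T u3) u1, A.rep1 a b (T u3) (T u1) u2]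
  simp only [hz, A.annih, smul_zero, add_zero, map_add, map_smul, map_zero]
  abel
end

section
/- Let T : h → g be a relative Rota-Baxter operator of weight λ from a 3-Lie algebra (h,[·,·,·]_h) to a 3-Lie algebra (g,[·,·,·]_g) with respect to an action ρ, and let S : h → g be a linear map. Then the following are equivalent: (a) for all u,v,w ∈ h, [Su,Tv,Tw]_g + [Tu,Sv,Tw]_g + [Tu,Tv,Sw]_g = T(ρ(Sw,Tu)v + ρ(Tv,Sw)u + ρ(Su,Tv)w + ρ(Tw,Su)v + ρ(Sv,Tw)u + ρ(Tu,Sv)w) + S(ρ(Tu,Tv)w + ρ(Tv,Tw)u + ρ(Tw,Tu)v + λ[u,v,w]_h); (b) S is a 1-cocycle of the descendent 3-Lie algebra (h,[·,·,·]_T) with coefficients in the representation ϱ, i.e. ϱ(u,v)S(w) + ϱ(v,w)S(u) + ϱ(w,u)S(v) = S([u,v,w]_T) for all u,v,w ∈ h. (Condition (a) is exactly the condition that S generates an infinitesimal deformation of T, obtained from the coefficient of t in the requirement that T + tS be a relative Rota-Baxter operator of weight λ modulo t².) -/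
/-- A linear map `S` generates an infinitesimal deformation of the relative
Rota-Baxter operator `T` (condition (a)) if and only if `S` is a 1-cocycle of the
descendent 3-Lie algebra `(h, [·,·,·]_T)` with coefficients in `ϱ` (condition (b)). -/
theorem infinitesimal_deformation_iff_two_cocycle
    (K : Type*) [Field K] [CharZero K]
    (g : Type*) [AddCommGroup g] [Module K g]
    (h : Type*) [AddCommGroup h] [Module K h]
    (L : ThreeLieAlg K g) (H : ThreeLieAlg K h)
    (A : ThreeLieAction K g h L H) (lam : K) (T : h →ₗ[K] g)
    (hT : IsRRB A lam T) (S : h →ₗ[K] g) :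
    (∀ u v w : h,
      L.br (S u) (T v) (T w) + L.br (T u) (S v) (T w) + L.br (T u) (T v) (S w) =
        T (A.ρ (S w) (T u) v + A.ρ (T v) (S w) u + A.ρ (S u) (T v) w
          + A.ρ (T w) (S u) v + A.ρ (S v) (T w) u + A.ρ (T u) (S v) w)
        + S (A.ρ (T u) (T v) w + A.ρ (T v) (T w) u + A.ρ (T w) (T u) v
          + lam • H.br u v w)) ↔
    (∀ u v w : h,
      varrho A T u v (S w) + varrho A T v w (S u) + varrho A T w u (S v) =
        S (descBr A lam T u v w)) := by
  have cyc : ∀ x y z : g, L.br x y z = L.br y z x := fun x y z => by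
    rw [L.skew12 x y z, L.skew23 y x z, neg_neg]
  constructor <;> intro h0 u v w <;> have h1 := h0 u v w <;>
    simp only [varrho, descBr, map_add] at h1 ⊢ <;>
    rw [cyc (S u) (T v) (T w), cyc (T u) (S v) (T w), cyc (S v) (T w) (T u)] at * <;>
    abel_nf at h1 ⊢ <;> linear_combination (norm := abel) h1
end
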